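/- Setting α = 1 in m_k = Σ_D (b(D)+1)·α^{a(D)} (sum over Dyck paths D of length 2k, a(D) down-steps from odd height, b(D) = k − a(D)) gives m_k = Σ_D (b(D)+1), and this equals the coefficient identity: 1 + Σ_{k≥1} m_k z^k = (1/2)(1 + 1/√(1 − 4z)); equivalently m_k = (1/2)·binomial(2k, k) for k ≥ 1. -/

import Mathlib

/-- The height of the lattice path with `±1` steps `f` after the first `i` steps
(`true` = up-step, `false` = down-step). -/
def pathHeight (r : ℕ) (f : Fin r → Bool) (i : ℕ) : ℤ :=
  ∑ j ∈ Finset.univ.filter (fun j : Fin r => (j : ℕ) < i),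
    (if f j then (1 : ℤ) else -1)

/-- A Dyck path of length `2k`, encoded by its step sequence. -/
def IsDyckPath (k : ℕ) (f : Fin (2 * k) → Bool) : Prop :=
  pathHeight (2 * k) f (2 * k) = 0 ∧ ∀ i : Fin (2 * k + 1), 0 ≤ pathHeight (2 * k) f i

instance (k : ℕ) : DecidablePred (IsDyckPath k) := fun f => by
  unfold IsDyckPath; infer_instance

/-- `a(D)`: the number of down-steps of the Dyck path `D` starting from an odd height. -/
def aCount (k : ℕ) (f : Fin (2 * k) → Bool) : ℕ :=
  (Finset.univ.filter
    (fun j : Fin (2 * k) => f j = false ∧ Odd (pathHeight (2 * k) f (j : ℕ)))).card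

/-!
Write `a(D)` and `b(D)` for the numbers of down-steps of `D` starting at odd and at even height,
so that `a + b = k`. The first-return decomposition `D = U P D Q` gives `a(D) = b(P) + 1 + a(Q)`
and `b(D) = a(P) + b(Q)`; summing over all Dyck paths of semilength `k + 1` and using the symmetry
`(P, Q) ↦ (Q, P)` yields `Σ a = Σ b + C_{k+1}`. Together with `Σ a + Σ b = (k + 1) C_{k+1}` this
gives `2 Σ (b + 1) = (k + 2) C_{k+1} = binom(2k+2, k+1)`. The generating function is then the
binomial series `Σ binom(2n, n) zⁿ = (1 - 4z)^(-1/2)`.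
-/

open DyckStep Finset

/-- `downsAt true l` (resp. `downsAt false l`) counts the `D`s of `l` at even (resp. odd) indices.
In a Dyck path the height before step `i` has the parity of `i`, so these are the down-steps
starting at even (resp. odd) height. -/
def downsAt : Bool → List DyckStep → ℕ
  | _, [] => 0
  | e, U :: l => downsAt (!e) l
  | e, D :: l => e.toNat + downsAt (!e) l

theorem downsAt_append (e : Bool) (l₁ l₂ : List DyckStep) :
    downsAt e (l₁ ++ l₂) = downsAt e l₁ + downsAt (e ^^ decide (Odd l₁.length)) l₂ := by
  induction l₁ generalizing e with
  | nil => simp [downsAt]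
  | cons s l ih =>
    cases s <;> simp [downsAt, ih, Nat.odd_add_one, add_assoc, -Nat.not_odd_iff_even]

theorem downsAt_add_downsAt_not (e : Bool) (l : List DyckStep) :
    downsAt e l + downsAt (!e) l = l.count D := by
  induction l generalizing e with
  | nil => rfl
  | cons s l ih =>
    have := ih (!e)
    cases s <;> cases e <;> simp_all [downsAt] <;> omega

theorem downsAt_ofFn (e : Bool) {n : ℕ} (g : Fin n → DyckStep) :
    downsAt e (List.ofFn g) = #{j | g j = D ∧ decide (Even (j : ℕ)) = e} := by
  induction n generalizing e with
  | zero => rfl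
  | succ n ih =>
    have h (j : Fin n) : decide (Even (j.succ : ℕ)) = e ↔ decide (Even (j : ℕ)) = !e := by
      cases e <;> simp [Nat.even_add_one]
    have ih' := ih (!e) (fun j => g j.succ)
    rw [List.ofFn_succ, card_filter, Fin.sum_univ_succ, ← card_filter]
    simp only [h, ← ih']
    rcases DyckStep.dichotomy (g 0) with h0 | h0 <;> cases e <;> simp [downsAt, h0]

namespace DyckWord

def oddDowns (p : DyckWord) : ℕ := downsAt false p.toList

def evenDowns (p : DyckWord) : ℕ := downsAt true p.toList

theorem not_odd_length (p : DyckWord) : ¬Odd p.toList.length := by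
  simp [← two_mul_semilength_eq_length]

theorem toList_add (p q : DyckWord) : (p + q).toList = p.toList ++ q.toList := rfl

theorem downsAt_add (e : Bool) (p q : DyckWord) :
    downsAt e (p + q).toList = downsAt e p.toList + downsAt e q.toList := by
  simp [toList_add, downsAt_append, p.not_odd_length]

theorem oddDowns_add (p q : DyckWord) : (p + q).oddDowns = p.oddDowns + q.oddDowns :=
  downsAt_add false p q

theorem evenDowns_add (p q : DyckWord) : (p + q).evenDowns = p.evenDowns + q.evenDowns :=
  downsAt_add true p q

theorem oddDowns_nest (p : DyckWord) : p.nest.oddDowns = p.evenDowns + 1 := by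
  simp [oddDowns, evenDowns, nest, downsAt, downsAt_append, p.not_odd_length]

theorem evenDowns_nest (p : DyckWord) : p.nest.evenDowns = p.oddDowns := by
  simp [oddDowns, evenDowns, nest, downsAt, downsAt_append, p.not_odd_length]

theorem oddDowns_add_evenDowns (p : DyckWord) : p.oddDowns + p.evenDowns = p.semilength := by
  rw [semilength_eq_count_D]; exact downsAt_add_downsAt_not false p.toList

abbrev Pair (k : ℕ) := {x : DyckWord × DyckWord // x.1.semilength + x.2.semilength = k}

def firstReturnEquiv (k : ℕ) : Pair k ≃ {p : DyckWord // p.semilength = k + 1} where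
  toFun x := ⟨x.1.1.nest + x.1.2, by simp [semilength_add, ← x.2]; omega⟩
  invFun p := ⟨(p.1.insidePart, p.1.outsidePart), by
    have hp : p.1 ≠ 0 := by rintro h; simpa [h] using p.2
    have := semilength_insidePart_add_semilength_outsidePart_add_one hp
    dsimp only
    have := p.2; omega⟩
  left_inv x := by
    ext <;> simp [insidePart_add, outsidePart_add, insidePart_nest, outsidePart_nest]
  right_inv p := by
    have hp : p.1 ≠ 0 := by rintro h; simpa [h] using p.2
    exact Subtype.ext (nest_insidePart_add_outsidePart hp)

instance (k : ℕ) : Fintype (Pair k) := .ofEquiv _ (firstReturnEquiv k).symm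

def pairSwap (k : ℕ) : Pair k ≃ Pair k :=
  (Equiv.prodComm _ _).subtypeEquiv fun x => by simp [add_comm]

theorem sum_oddDowns_add_sum_evenDowns (k : ℕ) :
    ∑ p : {p : DyckWord // p.semilength = k}, p.1.oddDowns +
      ∑ p : {p : DyckWord // p.semilength = k}, p.1.evenDowns = k * catalan k := by
  rw [← sum_add_distrib, sum_congr rfl fun p _ => (oddDowns_add_evenDowns p.1).trans p.2]
  simp [card_dyckWord_semilength_eq_catalan, mul_comm]

theorem sum_oddDowns_succ (k : ℕ) :
    ∑ p : {p : DyckWord // p.semilength = k + 1}, p.1.oddDowns =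
      ∑ p : {p : DyckWord // p.semilength = k + 1}, p.1.evenDowns + catalan (k + 1) := by
  rw [← card_dyckWord_semilength_eq_catalan, ← Fintype.card_congr (firstReturnEquiv k),
    ← (firstReturnEquiv k).sum_comp, ← (firstReturnEquiv k).sum_comp]
  have hswap : ∀ f : DyckWord → ℕ, ∑ x : Pair k, f x.1.1 = ∑ x : Pair k, f x.1.2 :=
    fun f => ((pairSwap k).sum_comp fun x => f x.1.1).symm
  simp only [firstReturnEquiv, Equiv.coe_fn_mk, oddDowns_add, oddDowns_nest, evenDowns_add,
    evenDowns_nest, sum_add_distrib, sum_const, Finset.card_univ, smul_eq_mul, mul_one]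
  rw [hswap evenDowns, hswap oddDowns]
  ring

end DyckWord

open DyckWord

theorem two_mul_sum_evenDowns_add_one (k : ℕ) :
    2 * ∑ p : {p : DyckWord // p.semilength = k + 1}, (p.1.evenDowns + 1) =
      (k + 1).centralBinom := by
  have hsum := sum_oddDowns_add_sum_evenDowns (k + 1)
  have hsucc := sum_oddDowns_succ k
  rw [sum_add_distrib, ← succ_mul_catalan_eq_centralBinom]
  simp only [sum_const, Finset.card_univ, card_dyckWord_semilength_eq_catalan, smul_eq_mul,
    mul_one]
  linarith

def stepList {r : ℕ} (f : Fin r → Bool) : List DyckStep :=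
  List.ofFn fun j => if f j then U else D

@[simp] theorem length_stepList {r : ℕ} (f : Fin r → Bool) : (stepList f).length = r := by
  simp [stepList]

theorem pathHeight_succ {r : ℕ} (f : Fin r → Bool) {i : ℕ} (hi : i < r) :
    pathHeight r f (i + 1) = pathHeight r f i + if f ⟨i, hi⟩ then 1 else -1 := by
  have : ({j : Fin r | (j : ℕ) < i + 1} : Finset (Fin r)) =
      insert ⟨i, hi⟩ ({j : Fin r | (j : ℕ) < i} : Finset (Fin r)) := by
    ext j; simp [Fin.ext_iff]; omega
  rw [pathHeight, this, sum_insert (by simp), add_comm]; rfl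

theorem odd_pathHeight_iff {r : ℕ} (f : Fin r → Bool) {i : ℕ} (hi : i ≤ r) :
    Odd (pathHeight r f i) ↔ Odd i := by
  induction i with
  | zero => simp [pathHeight]
  | succ i ih =>
    rw [pathHeight_succ f hi, Nat.odd_add_one, ← ih (by omega)]
    split <;> simp [Int.odd_add]

theorem pathHeight_eq_count {r : ℕ} (f : Fin r → Bool) {i : ℕ} (hi : i ≤ r) :
    pathHeight r f i = ((stepList f).take i).count U - ((stepList f).take i).count D := by
  induction i with
  | zero => simp [pathHeight]
  | succ i ih =>
    rw [pathHeight_succ f hi, ih (by omega), List.take_add_one,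
      List.getElem?_eq_getElem (by simpa using hi)]
    split <;> simp [stepList, *] <;> ring

theorem isDyckPath_iff {k : ℕ} (f : Fin (2 * k) → Bool) : IsDyckPath k f ↔
    (stepList f).count U = (stepList f).count D ∧
      ∀ i, ((stepList f).take i).count D ≤ ((stepList f).take i).count U := by
  have hfull : ∀ i, 2 * k ≤ i → (stepList f).take i = stepList f := fun i hi =>
    List.take_of_length_le (by simpa using hi)
  simp only [IsDyckPath, pathHeight_eq_count f le_rfl, hfull _ le_rfl, sub_eq_zero, Nat.cast_inj]
  refine and_congr_right fun _ => ⟨fun h i => ?_, fun h i => ?_⟩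
  · rcases le_total i (2 * k) with hi | hi
    · have := h ⟨i, by omega⟩
      rw [pathHeight_eq_count f hi] at this
      omega
    · rw [hfull i hi]; omega
  · rw [pathHeight_eq_count f (by omega)]
    have := h i
    omega

theorem aCount_eq_downsAt {k : ℕ} (f : Fin (2 * k) → Bool) :
    aCount k f = downsAt false (stepList f) := by
  rw [aCount, stepList, downsAt_ofFn]
  congr 1
  refine filter_congr fun j _ => ?_
  rw [odd_pathHeight_iff f j.isLt.le]
  cases f j <;> simp

def DyckWord.toPath (k : ℕ) (p : DyckWord) : Fin (2 * k) → Bool :=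
  fun j => decide (p.toList[j.1]? = some U)

theorem DyckWord.stepList_toPath {k : ℕ} {p : DyckWord} (hp : p.semilength = k) :
    stepList (p.toPath k) = p.toList := by
  have hlen : p.toList.length = 2 * k := by rw [← two_mul_semilength_eq_length, hp]
  refine List.ext_getElem (by simp [hlen]) fun i _ hi => ?_
  rcases DyckStep.dichotomy p.toList[i] with h | h <;>
    simp [stepList, toPath, List.getElem?_eq_getElem hi, h]

def dyckPathEquiv (k : ℕ) :
    {f : Fin (2 * k) → Bool // IsDyckPath k f} ≃ {p : DyckWord // p.semilength = k} where
  toFun f :=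
    have h := (isDyckPath_iff f.1).1 f.2
    ⟨⟨stepList f.1, h.1, h.2⟩, by
      rw [← Nat.mul_left_cancel_iff two_pos, two_mul_semilength_eq_length, length_stepList]⟩
  invFun p := ⟨p.1.toPath k, (isDyckPath_iff _).2 <| by
    rw [stepList_toPath p.2]; exact ⟨p.1.count_U_eq_count_D, p.1.count_D_le_count_U⟩⟩
  left_inv f := by ext j; cases h : f.1 j <;> simp [stepList, toPath, h]
  right_inv p := Subtype.ext <| DyckWord.ext <| stepList_toPath p.2

theorem toList_dyckPathEquiv {k : ℕ} (f : {f : Fin (2 * k) → Bool // IsDyckPath k f}) :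
    (dyckPathEquiv k f).1.toList = stepList f.1 := by
  rfl

theorem sum_dyckPaths_eq_sum_evenDowns (k : ℕ) :
    ∑ f ∈ univ.filter (IsDyckPath k), (k - aCount k f + 1) =
      ∑ p : {p : DyckWord // p.semilength = k}, (p.1.evenDowns + 1) := by
  rw [sum_subtype _ (fun _ => mem_filter_univ _), ← (dyckPathEquiv k).sum_comp]
  refine sum_congr rfl fun f _ => ?_
  have h := oddDowns_add_evenDowns (dyckPathEquiv k f).1
  rw [(dyckPathEquiv k f).2, oddDowns, toList_dyckPathEquiv, ← aCount_eq_downsAt] at h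
  omega

open Polynomial in
theorem Ring.succ_mul_choose_succ_succ {R : Type*} [Field R] [CharZero R] (r : R) (k : ℕ) :
    ((k : R) + 1) * Ring.choose (r + 1) (k + 1) = (r + 1) * Ring.choose r k := by
  rw [Ring.choose_eq_smul, Ring.choose_eq_smul, descPochhammer_succ_left]
  simp only [Nat.factorial_succ, Nat.cast_mul, Nat.cast_add, Nat.cast_one, mul_inv_rev,
    smeval_mul, smeval_X, pow_one, smeval_comp, smeval_sub, smeval_one, pow_zero, one_smul,
    add_sub_cancel_right, smul_eq_mul]
  field_simp

theorem four_pow_mul_choose_sub_half (n : ℕ) :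
    (4 : ℝ) ^ n * Ring.choose ((n : ℝ) - 1 / 2) n = n.centralBinom := by
  induction n with
  | zero => simp
  | succ n ih =>
    have h := Ring.succ_mul_choose_succ_succ ((n : ℝ) - 1 / 2) n
    have hc : ((n : ℝ) + 1) * (n + 1).centralBinom = 2 * (2 * n + 1) * n.centralBinom := by
      exact_mod_cast Nat.succ_mul_centralBinom_succ n
    rw [Nat.cast_succ, show (n : ℝ) + 1 - 1 / 2 = n - 1 / 2 + 1 by ring]
    apply mul_left_cancel₀ (show (n : ℝ) + 1 ≠ 0 by positivity)
    rw [hc, ← ih]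
    linear_combination (4 : ℝ) ^ (n + 1) * h

theorem hasSum_centralBinom_mul_pow {z : ℝ} (hz : |z| < 1 / 4) :
    HasSum (fun n => (n.centralBinom : ℝ) * z ^ n) (1 / √(1 - 4 * z)) := by
  have h4z : |4 * z| < 1 := by rw [abs_mul]; norm_num; linarith
  have := (Real.one_div_one_sub_rpow_hasFPowerSeriesOnBall_zero (1 / 2)).hasSum (y := 4 * z)
    (by rw [Metric.mem_eball, edist_dist, dist_zero_right, Real.norm_eq_abs]
        exact ENNReal.ofReal_lt_one.2 h4z)
  have hterm (n : ℕ) :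
      Ring.choose (1 / 2 + n - 1 : ℝ) n * (4 * z) ^ n = n.centralBinom * z ^ n := by
    rw [← four_pow_mul_choose_sub_half, mul_pow]
    ring_nf
  simpa only [FormalMultilinearSeries.ofScalars_apply_eq, zero_add, smul_eq_mul, hterm,
    Real.sqrt_eq_rpow] using this

/-- Setting `α = 1` in `m_k = Σ_D (b(D)+1)·α^{a(D)}` (over Dyck paths `D` of length `2k`,
`b(D) = k − a(D)`) gives `m_k = Σ_D (b(D)+1)`, whose generating function satisfies
`1 + Σ_{k≥1} m_k z^k = (1/2)(1 + 1/√(1−4z))`; equivalently `m_k = (1/2)·binomial(2k,k)` for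
`k ≥ 1`. -/
theorem marked_dyck_count_alpha_one
    (m : ℕ → ℕ)
    (hm : ∀ k : ℕ, m k = ∑ f ∈ Finset.univ.filter (IsDyckPath k),
      ((k - aCount k f) + 1)) :
    (∀ k : ℕ, 1 ≤ k → 2 * m k = Nat.choose (2 * k) k) ∧
    (∀ z : ℝ, |z| < 1 / 4 →
      Summable (fun k : ℕ => (m (k + 1) : ℝ) * z ^ (k + 1)) ∧
      1 + ∑' k : ℕ, (m (k + 1) : ℝ) * z ^ (k + 1)
        = (1 / 2) * (1 + 1 / Real.sqrt (1 - 4 * z))) := by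
  have hcount (k : ℕ) : 2 * m (k + 1) = (k + 1).centralBinom := by
    rw [hm, sum_dyckPaths_eq_sum_evenDowns, two_mul_sum_evenDowns_add_one]
  refine ⟨fun k hk => ?_, fun z hz => ?_⟩
  · obtain ⟨k, rfl⟩ := Nat.exists_eq_add_of_le' hk
    rw [hcount, Nat.centralBinom_eq_two_mul_choose]
  have hterm (k : ℕ) : (m (k + 1) : ℝ) * z ^ (k + 1) =
      ((k + 1).centralBinom * z ^ (k + 1)) / 2 := by
    rw [← hcount]; push_cast; ring
  have hsum : HasSum (fun k => (m (k + 1) : ℝ) * z ^ (k + 1)) ((1 / √(1 - 4 * z) - 1) / 2) := by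
    have := ((hasSum_nat_add_iff' 1).2 (hasSum_centralBinom_mul_pow hz)).div_const 2
    simpa [hterm] using this
  exact ⟨hsum.summable, by rw [hsum.tsum_eq]; ring⟩
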